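/- arXiv:math/0703797 — 5 statements merged into one kernel-verified Lean document; each statement's English description precedes it below -/
import Mathlib

section
/- For every g = [[a, b], [c, d]] ∈ Sp(1,1) and every h ∈ ℍ with |h| < 1, the quaternion ch + d is nonzero and the identity 1 - |g(h)|² = (1 - |h|²) / |ch + d|² holds, where g(h) = (ah+b)(ch+d)⁻¹. In particular |g(h)| < 1, so the fractional linear action of Sp(1,1) maps B₁(ℍ) into itself. -/
open Quaternion Matrix

/-- The matrix `J = !![1, 0; 0, -1]` over the quaternions. -/
noncomputable def matJ : Matrix (Fin 2) (Fin 2) ℍ[ℝ] := !![1, 0; 0, -1]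

/-- The group `Sp(1,1)` of `2 × 2` quaternionic matrices `g` with `g* J g = J`, where
`g*` is the conjugate transpose. -/
noncomputable def Sp11 : Set (Matrix (Fin 2) (Fin 2) ℍ[ℝ]) :=
  {g | gᴴ * matJ * g = matJ}

/-- The fractional linear action of a quaternionic matrix `g = !![a, b; c, d]` on a
quaternion `h`, given by `g(h) = (a h + b)(c h + d)⁻¹`. -/
noncomputable def flt (g : Matrix (Fin 2) (Fin 2) ℍ[ℝ]) (h : ℍ[ℝ]) : ℍ[ℝ] :=
  (g 0 0 * h + g 0 1) * (g 1 0 * h + g 1 1)⁻¹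

/-- For `g = !![a, b; c, d] ∈ Sp(1,1)` and `h` with `|h| < 1`, the quaternion `c h + d` is
nonzero and `1 - |g(h)|² = (1 - |h|²) / |c h + d|²`; in particular `|g(h)| < 1`, so the
fractional linear action of `Sp(1,1)` maps `B₁(ℍ)` into itself. -/
theorem sp11_ball_invariance (g : Matrix (Fin 2) (Fin 2) ℍ[ℝ]) (hg : g ∈ Sp11)
    (h : ℍ[ℝ]) (hh : ‖h‖ < 1) :
    g 1 0 * h + g 1 1 ≠ 0 ∧
    1 - ‖flt g h‖ ^ 2 = (1 - ‖h‖ ^ 2) / ‖g 1 0 * h + g 1 1‖ ^ 2 ∧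
    ‖flt g h‖ < 1 := by
  simp only [Sp11, Set.mem_setOf_eq] at hg
  have h00 := congr_fun (congr_fun hg 0) 0
  have h01 := congr_fun (congr_fun hg 0) 1
  have h10 := congr_fun (congr_fun hg 1) 0
  have h11 := congr_fun (congr_fun hg 1) 1
  simp [matJ, Matrix.mul_apply, Fin.sum_univ_two, Matrix.conjTranspose_apply] at h00 h01 h10 h11
  set a := g 0 0 with ha
  set b := g 0 1 with hb
  set c := g 1 0 with hc
  set d := g 1 1 with hd
  set p := a * h + b with hp
  set q := c * h + d with hq
  have key : star p * p - star q * q = star h * h - 1 := by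
    have expand : star p * p - star q * q =
        star h * (star a * a + -(star c * c)) * h + star h * (star a * b + -(star c * d)) +
          (star b * a + -(star d * c)) * h + (star b * b + -(star d * d)) := by
      simp only [hp, hq, star_add, StarMul.star_mul]
      noncomm_ring
    rw [expand, h00, h01, h10, h11]
    noncomm_ring
  have keyR : ‖p‖ ^ 2 - ‖q‖ ^ 2 = ‖h‖ ^ 2 - 1 := by
    have e : ((normSq p : ℝ) : ℍ[ℝ]) - ((normSq q : ℝ) : ℍ[ℝ])
        = ((normSq h : ℝ) : ℍ[ℝ]) - 1 := by
      rw [← Quaternion.star_mul_self, ← Quaternion.star_mul_self, ← Quaternion.star_mul_self]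
      exact key
    have e2 : (normSq p : ℝ) - normSq q = normSq h - 1 := by
      apply Quaternion.coe_injective
      push_cast
      exact e
    simpa [Quaternion.normSq_eq_norm_mul_self, sq] using e2
  have hqne : q ≠ 0 := by
    intro h0
    rw [h0, norm_zero] at keyR
    nlinarith [sq_nonneg ‖p‖, norm_nonneg h]
  have hqpos : 0 < ‖q‖ := norm_pos_iff.mpr hqne
  have hflt : ‖flt g h‖ = ‖p‖ / ‖q‖ := by
    rw [flt, ← ha, ← hb, ← hc, ← hd, ← hp, ← hq, norm_mul, norm_inv, div_eq_mul_inv]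
  refine ⟨hqne, ?_, ?_⟩
  · rw [hflt, div_pow]
    field_simp
    nlinarith [keyR]
  · rw [hflt, div_lt_one hqpos]
    nlinarith [norm_nonneg p, norm_nonneg q, keyR, hh, norm_nonneg h]
end

section
/- The fractional linear maps define a group action of Sp(1,1) on B₁(ℍ): for all g₁, g₂ ∈ Sp(1,1) and all h ∈ B₁(ℍ), (g₁g₂)(h) = g₁(g₂(h)), and the identity matrix acts as the identity map. -/
open Quaternion Matrix

lemma sp11_normSq {g : Matrix (Fin 2) (Fin 2) ℍ[ℝ]} (hg : g ∈ Sp11) (h : ℍ[ℝ]) :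
    Quaternion.normSq (g 0 0 * h + g 0 1)
      = Quaternion.normSq (g 1 0 * h + g 1 1) + Quaternion.normSq h - 1 := by
  have e00 := congrFun (congrFun hg 0) 0
  have e01 := congrFun (congrFun hg 0) 1
  have e10 := congrFun (congrFun hg 1) 0
  have e11 := congrFun (congrFun hg 1) 1
  simp only [Matrix.mul_apply, Fin.sum_univ_two, matJ, conjTranspose_apply,
    Matrix.cons_val', Matrix.cons_val_zero, Matrix.cons_val_one, Matrix.head_cons,
    Matrix.empty_val', Matrix.cons_val_fin_one, Matrix.head_fin_const, Matrix.of_apply,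
    mul_one, one_mul, mul_neg, mul_zero, zero_mul, add_zero, zero_add, mul_zero] at e00 e01 e10 e11
  have f00 : star (g 0 0) * g 0 0 - star (g 1 0) * g 1 0 = 1 := by
    rw [sub_eq_add_neg, ← neg_mul]; exact e00
  have f01 : star (g 0 0) * g 0 1 - star (g 1 0) * g 1 1 = 0 := by
    rw [sub_eq_add_neg, ← neg_mul]; exact e01
  have f10 : star (g 0 1) * g 0 0 - star (g 1 1) * g 1 0 = 0 := by
    rw [sub_eq_add_neg, ← neg_mul]; exact e10
  have f11 : star (g 0 1) * g 0 1 - star (g 1 1) * g 1 1 = -1 := by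
    rw [sub_eq_add_neg, ← neg_mul]; exact e11
  have key : star (g 0 0 * h + g 0 1) * (g 0 0 * h + g 0 1)
      - star (g 1 0 * h + g 1 1) * (g 1 0 * h + g 1 1) = star h * h - 1 := by
    have expand : star (g 0 0 * h + g 0 1) * (g 0 0 * h + g 0 1)
        - star (g 1 0 * h + g 1 1) * (g 1 0 * h + g 1 1)
        = star h * (star (g 0 0) * g 0 0 - star (g 1 0) * g 1 0) * h
          + star h * (star (g 0 0) * g 0 1 - star (g 1 0) * g 1 1)
          + (star (g 0 1) * g 0 0 - star (g 1 1) * g 1 0) * h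
          + (star (g 0 1) * g 0 1 - star (g 1 1) * g 1 1) := by
      simp only [star_add, StarMul.star_mul]
      noncomm_ring
    rw [expand, f00, f01, f10, f11]
    noncomm_ring
  have key2 : ((Quaternion.normSq (g 0 0 * h + g 0 1) : ℝ) : ℍ[ℝ])
      - ((Quaternion.normSq (g 1 0 * h + g 1 1) : ℝ) : ℍ[ℝ])
      = ((Quaternion.normSq h : ℝ) : ℍ[ℝ]) - 1 := by
    rw [← Quaternion.star_mul_self, ← Quaternion.star_mul_self, ← Quaternion.star_mul_self]
    exact key
  have := Quaternion.coe_injective (R := ℝ)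
  have key3 : (Quaternion.normSq (g 0 0 * h + g 0 1) - Quaternion.normSq (g 1 0 * h + g 1 1) : ℝ)
      = Quaternion.normSq h - 1 := by
    apply Quaternion.coe_injective
    push_cast
    exact key2
  linarith

lemma sp11_denom_ne {g : Matrix (Fin 2) (Fin 2) ℍ[ℝ]} (hg : g ∈ Sp11) {h : ℍ[ℝ]}
    (hh : ‖h‖ < 1) : g 1 0 * h + g 1 1 ≠ 0 := by
  have key := sp11_normSq hg h
  have hns : Quaternion.normSq h < 1 := by
    rw [Quaternion.normSq_eq_norm_mul_self]
    nlinarith [norm_nonneg h]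
  have h1 : (0:ℝ) ≤ Quaternion.normSq (g 0 0 * h + g 0 1) := by
    rw [Quaternion.normSq_eq_norm_mul_self]; positivity
  intro hcon
  rw [hcon] at key
  simp only [map_zero, zero_add] at key
  linarith

lemma sp11_norm_lt {g : Matrix (Fin 2) (Fin 2) ℍ[ℝ]} (hg : g ∈ Sp11) {h : ℍ[ℝ]}
    (hh : ‖h‖ < 1) : ‖flt g h‖ < 1 := by
  have key := sp11_normSq hg h
  have hns : Quaternion.normSq h < 1 := by
    rw [Quaternion.normSq_eq_norm_mul_self]
    nlinarith [norm_nonneg h]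
  have hd := sp11_denom_ne hg hh
  have hdpos : 0 < ‖g 1 0 * h + g 1 1‖ := norm_pos_iff.mpr hd
  have hlt : ‖g 0 0 * h + g 0 1‖ < ‖g 1 0 * h + g 1 1‖ := by
    rw [Quaternion.normSq_eq_norm_mul_self, Quaternion.normSq_eq_norm_mul_self,
      Quaternion.normSq_eq_norm_mul_self] at key
    nlinarith [norm_nonneg (g 0 0 * h + g 0 1), norm_nonneg (g 1 0 * h + g 1 1),
      norm_nonneg h, hh]
  rw [flt, norm_mul, norm_inv, ← div_eq_mul_inv, div_lt_one hdpos]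
  exact hlt

lemma flt_aux (a b p q : ℍ[ℝ]) (hq : q ≠ 0) :
    a * (p * q⁻¹) + b = (a * p + b * q) * q⁻¹ := by
  rw [add_mul, mul_assoc, mul_assoc, mul_inv_cancel₀ hq, mul_one]

lemma sp11_mul_mem {g₁ g₂ : Matrix (Fin 2) (Fin 2) ℍ[ℝ]} (h₁ : g₁ ∈ Sp11)
    (h₂ : g₂ ∈ Sp11) : g₁ * g₂ ∈ Sp11 := by
  simp only [Sp11, Set.mem_setOf_eq] at *
  rw [conjTranspose_mul]
  calc g₂ᴴ * g₁ᴴ * matJ * (g₁ * g₂) = g₂ᴴ * (g₁ᴴ * matJ * g₁) * g₂ := by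
        simp only [Matrix.mul_assoc]
    _ = g₂ᴴ * matJ * g₂ := by rw [h₁, Matrix.mul_assoc]
    _ = matJ := h₂

/-- The fractional linear maps define a group action of `Sp(1,1)` on `B₁(ℍ)`:
`(g₁ g₂)(h) = g₁(g₂(h))` for all `g₁, g₂ ∈ Sp(1,1)` and `h ∈ B₁(ℍ)`, and the identity
matrix acts as the identity map. -/
theorem sp11_group_action :
    (∀ g₁ ∈ Sp11, ∀ g₂ ∈ Sp11, ∀ h : ℍ[ℝ], ‖h‖ < 1 →
      flt (g₁ * g₂) h = flt g₁ (flt g₂ h)) ∧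
    (∀ h : ℍ[ℝ], ‖h‖ < 1 → flt 1 h = h) := by
  constructor
  · intro g₁ hg₁ g₂ hg₂ h hh
    set a₁ := g₁ 0 0; set b₁ := g₁ 0 1; set c₁ := g₁ 1 0; set d₁ := g₁ 1 1
    set p := g₂ 0 0 * h + g₂ 0 1 with hp
    set q := g₂ 1 0 * h + g₂ 1 1 with hq0
    have hq : q ≠ 0 := sp11_denom_ne hg₂ hh
    have hw : flt g₂ h = p * q⁻¹ := rfl
    have hP : (g₁ * g₂) 0 0 * h + (g₁ * g₂) 0 1 = a₁ * p + b₁ * q := by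
      simp only [Matrix.mul_apply, Fin.sum_univ_two, hp, hq0]
      noncomm_ring
    have hQ : (g₁ * g₂) 1 0 * h + (g₁ * g₂) 1 1 = c₁ * p + d₁ * q := by
      simp only [Matrix.mul_apply, Fin.sum_univ_two, hp, hq0]
      noncomm_ring
    have hQne : c₁ * p + d₁ * q ≠ 0 := by
      rw [← hQ]; exact sp11_denom_ne (sp11_mul_mem hg₁ hg₂) hh
    have h1 := flt_aux a₁ b₁ p q hq
    have h2 := flt_aux c₁ d₁ p q hq
    rw [hw, flt, flt, hP, hQ, h1, h2, _root_.mul_inv_rev, inv_inv, mul_assoc,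
      inv_mul_cancel_left₀ hq]
  · intro h _
    simp [flt, Matrix.one_apply]
end

section
/- (Iwasawa decomposition G = NAK for Sp(1,1)) Every g ∈ Sp(1,1) can be written as g = n a_t k where n = [[1+q, -q], [q, 1-q]] for some purely imaginary quaternion q (q* = -q), a_t = [[cosh t, sinh t], [sinh t, cosh t]] for some t ∈ ℝ, and k = diag(u₁, u₂) for some unit quaternions u₁, u₂. -/
open Quaternion Matrix

private lemma entry1 (q x y : ℍ[ℝ]) (e : ℝ) (he : e ≠ 0)
    (hqx : q * x = (2⁻¹ : ℝ) • y - ((2 * (e * e))⁻¹ : ℝ) • x) :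
    ((1 + q) * (((e⁻¹ + e) / 2 : ℝ) : ℍ[ℝ]) + -(q * (((e⁻¹ - e) / 2 : ℝ) : ℍ[ℝ]))) * (e⁻¹ • x)
      = (2⁻¹ : ℝ) • (y + x) := by
  simp only [Quaternion.mul_coe_eq_smul, Quaternion.coe_mul_eq_smul, smul_mul_assoc, add_mul, one_mul, neg_mul,
    mul_smul_comm, neg_smul, smul_neg]
  rw [hqx]
  match_scalars <;> field_simp <;> ring

private lemma entry2 (q x y : ℍ[ℝ]) (e : ℝ) (he : e ≠ 0)
    (hqx : q * x = (2⁻¹ : ℝ) • y - ((2 * (e * e))⁻¹ : ℝ) • x) :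
    (q * (((e⁻¹ + e) / 2 : ℝ) : ℍ[ℝ]) + (1 - q) * (((e⁻¹ - e) / 2 : ℝ) : ℍ[ℝ])) * (e⁻¹ • x)
      = (2⁻¹ : ℝ) • (y - x) := by
  simp only [Quaternion.mul_coe_eq_smul, Quaternion.coe_mul_eq_smul, smul_mul_assoc, add_mul, sub_mul, one_mul, neg_mul,
    mul_smul_comm, neg_smul, smul_neg, smul_sub]
  rw [hqx]
  match_scalars <;> field_simp <;> ring

private lemma entry3 (q w z : ℍ[ℝ]) (e : ℝ) (he : e ≠ 0)
    (hqw : q * w = ((2 * (e * e))⁻¹ : ℝ) • w - (2⁻¹ : ℝ) • z) :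
    ((1 + q) * (((e⁻¹ - e) / 2 : ℝ) : ℍ[ℝ]) + -(q * (((e⁻¹ + e) / 2 : ℝ) : ℍ[ℝ]))) * (e⁻¹ • w)
      = (2⁻¹ : ℝ) • (z - w) := by
  simp only [Quaternion.mul_coe_eq_smul, Quaternion.coe_mul_eq_smul, smul_mul_assoc, add_mul, one_mul, neg_mul,
    mul_smul_comm, neg_smul, smul_neg, smul_sub]
  rw [hqw]
  match_scalars <;> field_simp <;> ring

private lemma entry4 (q w z : ℍ[ℝ]) (e : ℝ) (he : e ≠ 0)
    (hqw : q * w = ((2 * (e * e))⁻¹ : ℝ) • w - (2⁻¹ : ℝ) • z) :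
    (q * (((e⁻¹ - e) / 2 : ℝ) : ℍ[ℝ]) + (1 - q) * (((e⁻¹ + e) / 2 : ℝ) : ℍ[ℝ])) * (e⁻¹ • w)
      = (2⁻¹ : ℝ) • (z + w) := by
  simp only [Quaternion.mul_coe_eq_smul, Quaternion.coe_mul_eq_smul, smul_mul_assoc, add_mul, sub_mul, one_mul, neg_mul,
    mul_smul_comm, neg_smul, smul_neg, smul_sub]
  rw [hqw]
  match_scalars <;> field_simp <;> ring

private lemma sp11_mul_one_comm {A : Type*} [Ring A] [Algebra ℝ A] [FiniteDimensional ℝ A]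
    {g h : A} (hgh : h * g = 1) : g * h = 1 := by
  have hinj : Function.Injective (LinearMap.mulLeft ℝ g) := by
    intro x y hxy
    simpa [← mul_assoc, hgh] using congrArg (h * ·) hxy
  obtain ⟨y, hy⟩ := (LinearMap.injective_iff_surjective.mp hinj) 1
  have hyh : y = h := by
    have := congrArg (h * ·) hy
    simpa [← mul_assoc, hgh] using this
  rw [← hyh]; exact hy

private lemma quat_core (a b c d : ℍ[ℝ])
    (h1 : star a * a + -(star c * c) = 1)
    (h3 : star b * b + -(star d * d) = -1)
    (h1' : a * star a + -(b * star b) = 1)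
    (h2' : a * star c + -(b * star d) = 0)
    (h3' : c * star c + -(d * star d) = -1) :
    ∃ (q : ℍ[ℝ]) (t : ℝ) (u₁ u₂ : ℍ[ℝ]),
      star q = -q ∧ ‖u₁‖ = 1 ∧ ‖u₂‖ = 1 ∧
      a = ((1 + q) * (Real.cosh t : ℍ[ℝ]) + -(q * (Real.sinh t : ℍ[ℝ]))) * u₁ ∧
      b = ((1 + q) * (Real.sinh t : ℍ[ℝ]) + -(q * (Real.cosh t : ℍ[ℝ]))) * u₂ ∧
      c = (q * (Real.cosh t : ℍ[ℝ]) + (1 - q) * (Real.sinh t : ℍ[ℝ])) * u₁ ∧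
      d = (q * (Real.sinh t : ℍ[ℝ]) + (1 - q) * (Real.cosh t : ℍ[ℝ])) * u₂ := by
  have H1 : a * star a = 1 + b * star b := by
    rw [← sub_eq_add_neg, sub_eq_iff_eq_add] at h1'; exact h1'
  have H3 : d * star d = 1 + c * star c := by
    rw [← sub_eq_add_neg, sub_eq_iff_eq_add] at h3'
    rw [h3']; abel
  have H3c : c * star c = d * star d - 1 := by rw [H3]; abel
  have H2 : a * star c = b * star d := by
    rw [← sub_eq_add_neg, sub_eq_zero] at h2'; exact h2'
  have H2s : c * star a = d * star b := by
    have := congrArg star H2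
    simpa [StarMul.star_mul, star_star] using this
  have hbd2 : b * star b = d * star d - 1 := by
    rw [star_mul_self, star_mul_self] at h3
    rw [← sub_eq_add_neg, sub_eq_iff_eq_add] at h3
    rw [self_mul_star, self_mul_star, h3]; abel
  -- a ≠ c
  have hac : a - c ≠ 0 := by
    intro h
    rw [sub_eq_zero] at h
    subst h
    simp at h1
  obtain ⟨e, he_def⟩ : ∃ e : ℝ, ‖a - c‖ = e := ⟨_, rfl⟩
  have he : 0 < e := he_def ▸ norm_pos_iff.mpr hac
  have he' : e ≠ 0 := ne_of_gt he
  have hsx : star (a - c) * (a - c) = ((e * e : ℝ) : ℍ[ℝ]) := by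
    rw [star_mul_self, normSq_eq_norm_mul_self, he_def]
  -- claim 1
  have L1 : (d - b) * star (d - b) = d * star d - d * star b - b * star d + b * star b := by
    rw [star_sub]; noncomm_ring
  have R1 : (a - c) * star (a - c) = a * star a - a * star c - c * star a + c * star c := by
    rw [star_sub]; noncomm_ring
  have claim1 : (d - b) * star (d - b) = (a - c) * star (a - c) := by
    rw [L1, R1, H1, H3, ← H2, ← H2s]; abel
  have hwnorm : ‖d - b‖ = e := by
    have h := claim1
    rw [self_mul_star, self_mul_star] at h
    have h2 := Quaternion.coe_injective h
    rw [normSq_eq_norm_mul_self, normSq_eq_norm_mul_self, he_def] at h2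
    exact (mul_self_inj (norm_nonneg _) he.le).mp h2
  have hsw : star (d - b) * (d - b) = ((e * e : ℝ) : ℍ[ℝ]) := by
    rw [star_mul_self, normSq_eq_norm_mul_self, hwnorm]
  -- claim 2
  have L2 : (d + b) * star (d - b) = d * star d - d * star b + b * star d - b * star b := by
    rw [star_sub]; noncomm_ring
  have R2 : (a + c) * star (a - c) = a * star a - a * star c + c * star a - c * star c := by
    rw [star_sub]; noncomm_ring
  have claim2 : (d + b) * star (d - b) + (a + c) * star (a - c) = 2 := by
    rw [L2, R2, H1, H3, ← H2, ← H2s]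
    have : (2 : ℍ[ℝ]) = 1 + 1 := by norm_num
    rw [this]; abel
  have hyxw : (a + c) * star (a - c) = 2 - (d + b) * star (d - b) :=
    eq_sub_of_add_eq' claim2
  -- x y* + y x* = 2
  have L3 : (a - c) * star (a + c) = a * star a + a * star c - c * star a - c * star c := by
    rw [star_add]; noncomm_ring
  have hyx : (a - c) * star (a + c) + (a + c) * star (a - c) = 2 := by
    rw [L3, R2, H1, H3c, hbd2]
    have : (2 : ℍ[ℝ]) = 1 + 1 := by norm_num
    rw [this]; abel
  -- hyperbolic values
  have hcosh : Real.cosh (Real.log e⁻¹) = (e⁻¹ + e) / 2 := by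
    rw [Real.cosh_log (inv_pos.mpr he), inv_inv]
  have hsinh : Real.sinh (Real.log e⁻¹) = (e⁻¹ - e) / 2 := by
    rw [Real.sinh_log (inv_pos.mpr he), inv_inv]
  -- key products
  have hqx : (((2 * (e * e))⁻¹ : ℝ) • ((a + c) * star (a - c) - 1)) * (a - c)
      = (2⁻¹ : ℝ) • (a + c) - ((2 * (e * e))⁻¹ : ℝ) • (a - c) := by
    rw [smul_mul_assoc, sub_mul, one_mul, mul_assoc, hsx, Quaternion.mul_coe_eq_smul]
    match_scalars <;> field_simp
  have hqw : (((2 * (e * e))⁻¹ : ℝ) • ((a + c) * star (a - c) - 1)) * (d - b)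
      = ((2 * (e * e))⁻¹ : ℝ) • (d - b) - (2⁻¹ : ℝ) • (d + b) := by
    rw [smul_mul_assoc, sub_mul, one_mul, hyxw, sub_mul, mul_assoc, hsw,
      Quaternion.mul_coe_eq_smul, two_mul (d - b)]
    match_scalars <;> field_simp <;> ring
  refine ⟨((2 * (e * e))⁻¹ : ℝ) • ((a + c) * star (a - c) - 1), Real.log e⁻¹,
    e⁻¹ • (a - c), e⁻¹ • (d - b), ?_, ?_, ?_, ?_, ?_, ?_, ?_⟩
  · -- purely imaginary
    have hstar : star (((2 * (e * e))⁻¹ : ℝ) • ((a + c) * star (a - c) - 1))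
        = ((2 * (e * e))⁻¹ : ℝ) • ((a - c) * star (a + c) - 1) := by
      rw [Quaternion.star_smul]
      congr 1
      rw [star_sub ((a + c) * star (a - c)) 1, StarMul.star_mul, star_star, star_one]
    have hsum : (((2 * (e * e))⁻¹ : ℝ) • ((a + c) * star (a - c) - 1))
        + star (((2 * (e * e))⁻¹ : ℝ) • ((a + c) * star (a - c) - 1)) = 0 := by
      rw [hstar, ← smul_add]
      have h11 : ((a + c) * star (a - c) - 1) + ((a - c) * star (a + c) - 1)
          = ((a - c) * star (a + c) + (a + c) * star (a - c)) - (1 + 1) := by abel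
      rw [h11, hyx]
      norm_num
    exact eq_neg_of_add_eq_zero_right hsum
  · rw [norm_smul, Real.norm_eq_abs, he_def, abs_of_pos (inv_pos.mpr he)]
    field_simp
  · rw [norm_smul, Real.norm_eq_abs, hwnorm, abs_of_pos (inv_pos.mpr he)]
    field_simp
  · rw [hcosh, hsinh, entry1 _ _ _ e he' hqx]
    match_scalars <;> ring
  · rw [hcosh, hsinh, entry3 _ _ _ e he' hqw]
    match_scalars <;> ring
  · rw [hcosh, hsinh, entry2 _ _ _ e he' hqx]
    match_scalars <;> ring
  · rw [hcosh, hsinh, entry4 _ _ _ e he' hqw]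
    match_scalars <;> ring

set_option maxHeartbeats 1000000 in
/-- Iwasawa decomposition `G = NAK` for `Sp(1,1)`: every `g ∈ Sp(1,1)` can be written as
`g = n aₜ k` with `n = !![1+q, -q; q, 1-q]` for a purely imaginary quaternion `q`,
`aₜ = !![cosh t, sinh t; sinh t, cosh t]` for some `t ∈ ℝ`, and `k = diag(u₁, u₂)` for
unit quaternions `u₁, u₂`. -/
theorem sp11_iwasawa (g : Matrix (Fin 2) (Fin 2) ℍ[ℝ]) (hg : g ∈ Sp11) :
    ∃ (q : ℍ[ℝ]) (t : ℝ) (u₁ u₂ : ℍ[ℝ]),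
      star q = -q ∧ ‖u₁‖ = 1 ∧ ‖u₂‖ = 1 ∧
      g = !![1 + q, -q; q, 1 - q] *
          !![(Real.cosh t : ℍ[ℝ]), (Real.sinh t : ℍ[ℝ]);
             (Real.sinh t : ℍ[ℝ]), (Real.cosh t : ℍ[ℝ])] *
          !![u₁, 0; 0, u₂] := by
  simp only [Sp11, Set.mem_setOf_eq] at hg
  have hJJ : matJ * matJ = 1 := by
    apply Matrix.ext; intro i j
    fin_cases i <;> fin_cases j <;>
      simp [matJ, Matrix.mul_apply, Fin.sum_univ_two, Matrix.one_apply]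
  have hleft : (matJ * gᴴ * matJ) * g = 1 := by
    rw [show matJ * gᴴ * matJ * g = matJ * (gᴴ * matJ * g) by noncomm_ring, hg, hJJ]
  have hright := sp11_mul_one_comm hleft
  have hg' : g * matJ * gᴴ = matJ := by
    have h2 : g * (matJ * gᴴ * matJ) * matJ = 1 * matJ := by rw [hright]
    rw [show g * (matJ * gᴴ * matJ) * matJ = g * matJ * gᴴ * (matJ * matJ) by noncomm_ring,
      hJJ, mul_one, one_mul] at h2
    exact h2
  have h1 := congrFun (congrFun hg 0) 0
  have h3 := congrFun (congrFun hg 1) 1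
  have h1' := congrFun (congrFun hg' 0) 0
  have h2' := congrFun (congrFun hg' 0) 1
  have h3' := congrFun (congrFun hg' 1) 1
  simp [matJ, Matrix.mul_apply, Fin.sum_univ_two] at h1 h3 h1' h2' h3'
  obtain ⟨q, t, u₁, u₂, hq, hu1, hu2, e1, e2, e3, e4⟩ :=
    quat_core (g 0 0) (g 0 1) (g 1 0) (g 1 1) h1 h3 h1' h2' h3'
  refine ⟨q, t, u₁, u₂, hq, hu1, hu2, ?_⟩
  apply Matrix.ext; intro i j
  fin_cases i <;> fin_cases j <;> simp [Matrix.mul_apply, Fin.sum_univ_two]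
  · exact e1
  · exact e2
  · exact e3
  · exact e4
end

section
/- (Explicit NAK factors) Suppose g = [[a, b], [c, d]] ∈ Sp(1,1) factors as g = n a_t k with n = [[1+q, -q], [q, 1-q]], q* = -q, a_t = [[cosh t, sinh t], [sinh t, cosh t]], and k = diag(u₁, u₂) with |u₁| = |u₂| = 1. Then a - c = e^{-t} u₁, d - b = e^{-t} u₂, and e^{t} = (1 - |b d⁻¹|²)^{1/2} / |1 - b d⁻¹|. -/
open Quaternion Matrix

lemma pure_norm_sq (x : ℝ) (p : ℍ[ℝ]) (hp : star p = -p) :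
    ‖(x : ℍ[ℝ]) + p‖ ^ 2 = x ^ 2 + ‖p‖ ^ 2 := by
  have hre : p.re = 0 := by
    have := congrArg QuaternionAlgebra.re hp
    simp at this; linarith
  have h1 : ‖(x : ℍ[ℝ]) + p‖ ^ 2 = normSq ((x : ℍ[ℝ]) + p) := by
    rw [sq, ← Quaternion.normSq_eq_norm_mul_self]
  have h2 : ‖p‖ ^ 2 = normSq p := by rw [sq, ← Quaternion.normSq_eq_norm_mul_self]
  rw [h1, h2, Quaternion.normSq_def', Quaternion.normSq_def']
  simp [hre]
  ring

set_option maxHeartbeats 1000000 in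
/-- Explicit `NAK` factors: if `g = !![a, b; c, d] ∈ Sp(1,1)` factors as `g = n aₜ k` with
`n = !![1+q, -q; q, 1-q]`, `q* = -q`, `aₜ = !![cosh t, sinh t; sinh t, cosh t]`, and
`k = diag(u₁, u₂)` with `|u₁| = |u₂| = 1`, then `a - c = e^{-t} u₁`, `d - b = e^{-t} u₂`,
and `e^t = (1 - |b d⁻¹|²)^{1/2} / |1 - b d⁻¹|`. -/
theorem sp11_nak_factors (a b c d q u₁ u₂ : ℍ[ℝ]) (t : ℝ)
    (hg : !![a, b; c, d] ∈ Sp11)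
    (hq : star q = -q) (hu₁ : ‖u₁‖ = 1) (hu₂ : ‖u₂‖ = 1)
    (hfac : !![a, b; c, d] =
      !![1 + q, -q; q, 1 - q] *
        !![(Real.cosh t : ℍ[ℝ]), (Real.sinh t : ℍ[ℝ]);
           (Real.sinh t : ℍ[ℝ]), (Real.cosh t : ℍ[ℝ])] *
        !![u₁, 0; 0, u₂]) :
    a - c = (Real.exp (-t) : ℍ[ℝ]) * u₁ ∧
    d - b = (Real.exp (-t) : ℍ[ℝ]) * u₂ ∧
    Real.exp t = Real.sqrt (1 - ‖b * d⁻¹‖ ^ 2) / ‖1 - b * d⁻¹‖ := by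
  rw [Matrix.mul_fin_two, Matrix.mul_fin_two] at hfac
  have ha := congrFun (congrFun hfac 0) 0
  have hb := congrFun (congrFun hfac 0) 1
  have hc := congrFun (congrFun hfac 1) 0
  have hd := congrFun (congrFun hfac 1) 1
  simp at ha hb hc hd
  set ch : ℝ := Real.cosh t with hch
  set s : ℝ := Real.sinh t with hs
  have hE : (Real.exp (-t) : ℝ) = ch - s := (Real.cosh_sub_sinh t).symm
  set E : ℝ := Real.exp (-t) with hEdef
  have hEpos : 0 < E := Real.exp_pos _
  -- part 1
  have h1 : a - c = (E : ℍ[ℝ]) * u₁ := by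
    rw [ha, hc, hE]
    push_cast
    noncomm_ring
  -- part 2
  have h2 : d - b = (E : ℍ[ℝ]) * u₂ := by
    rw [hd, hb, hE]
    push_cast
    noncomm_ring
  refine ⟨h1, h2, ?_⟩
  -- rewrite b and d
  have hb' : b = ((s : ℍ[ℝ]) + (-((E : ℝ) • q))) * u₂ := by
    rw [hb]
    congr 1
    have h3 : ((1 : ℍ[ℝ]) + q) * (s : ℍ[ℝ]) + -(q * (ch : ℍ[ℝ])) =
        (s : ℍ[ℝ]) + -(q * (((ch : ℝ) - s : ℝ) : ℍ[ℝ])) := by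
      push_cast
      noncomm_ring
    rw [h3, Quaternion.mul_coe_eq_smul, ← hE]
  have hd' : d = ((ch : ℍ[ℝ]) + (-((E : ℝ) • q))) * u₂ := by
    rw [hd]
    congr 1
    have h3 : q * (s : ℍ[ℝ]) + ((1 : ℍ[ℝ]) - q) * (ch : ℍ[ℝ]) =
        (ch : ℍ[ℝ]) + -(q * (((ch : ℝ) - s : ℝ) : ℍ[ℝ])) := by
      push_cast
      noncomm_ring
    rw [h3, Quaternion.mul_coe_eq_smul, ← hE]
  have hpure : star (-((E : ℝ) • q)) = -(-((E : ℝ) • q)) := by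
    simp [hq]
  have hnq : ‖-((E : ℝ) • q)‖ ^ 2 = E ^ 2 * ‖q‖ ^ 2 := by
    rw [norm_neg, norm_smul]
    rw [Real.norm_eq_abs, abs_of_pos hEpos, mul_pow]
  have hbn : ‖b‖ ^ 2 = s ^ 2 + E ^ 2 * ‖q‖ ^ 2 := by
    rw [hb', norm_mul, hu₂, mul_one, pure_norm_sq s _ hpure, hnq]
  have hdn : ‖d‖ ^ 2 = ch ^ 2 + E ^ 2 * ‖q‖ ^ 2 := by
    rw [hd', norm_mul, hu₂, mul_one, pure_norm_sq ch _ hpure, hnq]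
  have hch1 : 1 ≤ ch := Real.one_le_cosh t
  have hdpos : 0 < ‖d‖ := by
    have : (0:ℝ) < ‖d‖ ^ 2 := by nlinarith [sq_nonneg (E * ‖q‖), norm_nonneg q]
    nlinarith [norm_nonneg d]
  have hdne : d ≠ 0 := norm_pos_iff.mp hdpos
  have key1 : 1 - ‖b * d⁻¹‖ ^ 2 = 1 / ‖d‖ ^ 2 := by
    have hcs : ‖d‖ ^ 2 - ‖b‖ ^ 2 = 1 := by
      have := Real.cosh_sq_sub_sinh_sq t
      rw [hbn, hdn]; linarith
    rw [norm_mul, norm_inv, mul_pow, inv_pow]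
    field_simp
    linarith
  have key2 : ‖1 - b * d⁻¹‖ = E / ‖d‖ := by
    have : (1 : ℍ[ℝ]) - b * d⁻¹ = (d - b) * d⁻¹ := by
      rw [sub_mul, mul_inv_cancel₀ hdne]
    rw [this, h2, norm_mul, norm_mul, norm_inv, Quaternion.norm_coe, hu₂,
      Real.norm_eq_abs, abs_of_pos hEpos, mul_one, div_eq_mul_inv]
  rw [key1, key2, one_div, Real.sqrt_inv, Real.sqrt_sq hdpos.le]
  rw [hEdef, Real.exp_neg]
  field_simp
end

section
/- (Hypergeometric form of the expansion coefficients) Let λ ∈ ℝ with λ ≥ 1, let x ∈ ℝ with |x| < 1, and let j ∈ ℕ. Then Σ_{i=0}^∞ ((λ-1)_{i+j+1}/(i+j+1)!) · ((λ-1)_i/i!) · (j+1) · x^{2i+j} = ((λ-1)_{j+1}/j!) · x^j · Σ_{n=0}^∞ ((λ+j)_n (λ-1)_n / ((j+2)_n n!)) · x^{2n}, i.e., the j-th coefficient in the character expansion equals ((λ-1)_{j+1}/j!) x^j ₂F₁(λ+j, λ-1; j+2; x²). -/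
open Polynomial

lemma asc_add_eval (r : ℝ) (n m : ℕ) :
    (ascPochhammer ℝ (n + m)).eval r =
      (ascPochhammer ℝ n).eval r * (ascPochhammer ℝ m).eval (r + n) := by
  rw [← ascPochhammer_mul, eval_mul, eval_comp, eval_add, eval_X, eval_natCast]

/-- Hypergeometric form of the expansion coefficients: for `λ ≥ 1`, `|x| < 1` and `j ∈ ℕ`,
`Σ_i ((λ-1)_{i+j+1}/(i+j+1)!) ((λ-1)_i/i!) (j+1) x^{2i+j}
  = ((λ-1)_{j+1}/j!) x^j ₂F₁(λ+j, λ-1; j+2; x²)`,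
where `(a)_n` is the ascending factorial and
`₂F₁(a, b; c; t) = Σ_n (a)_n (b)_n / ((c)_n n!) tⁿ`. -/
theorem coefficient_hypergeometric (lam : ℝ) (hlam : 1 ≤ lam) (x : ℝ) (hx : |x| < 1)
    (j : ℕ) :
    (∑' i : ℕ, (ascPochhammer ℝ (i + j + 1)).eval (lam - 1) / (Nat.factorial (i + j + 1)) *
        ((ascPochhammer ℝ i).eval (lam - 1) / (Nat.factorial i)) * (j + 1) * x ^ (2 * i + j)) =
      (ascPochhammer ℝ (j + 1)).eval (lam - 1) / (Nat.factorial j) * x ^ j *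
        ∑' n : ℕ, (ascPochhammer ℝ n).eval (lam + j) * (ascPochhammer ℝ n).eval (lam - 1) /
          ((ascPochhammer ℝ n).eval ((j : ℝ) + 2) * Nat.factorial n) * x ^ (2 * n) := by
  rw [← tsum_mul_left]
  refine tsum_congr fun i => ?_
  have h1 : (i + j + 1) = (j + 1) + i := by ring
  have hpoch : (ascPochhammer ℝ (i + j + 1)).eval (lam - 1) =
      (ascPochhammer ℝ (j + 1)).eval (lam - 1) * (ascPochhammer ℝ i).eval (lam + j) := by
    rw [h1, asc_add_eval]
    congr 1
    push_cast
    ring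
  have hfact : ((i + j + 1).factorial : ℝ) =
      ((j + 1).factorial : ℝ) * (ascPochhammer ℝ i).eval ((j : ℝ) + 2) := by
    have := asc_add_eval 1 (j + 1) i
    simp only [ascPochhammer_eval_one] at this
    rw [h1, this]
    push_cast
    ring_nf
  have hjpos : (0 : ℝ) < (ascPochhammer ℝ i).eval ((j : ℝ) + 2) :=
    ascPochhammer_pos i _ (by positivity)
  have hf1 : ((j + 1).factorial : ℝ) ≠ 0 := by positivity
  have hf2 : (i.factorial : ℝ) ≠ 0 := by positivity
  have hf3 : (j.factorial : ℝ) ≠ 0 := by positivity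
  have hfs : ((j + 1).factorial : ℝ) = (j + 1) * j.factorial := by
    rw [Nat.factorial_succ]; push_cast; ring
  have hxp : x ^ (2 * i + j) = x ^ (2 * i) * x ^ j := by rw [pow_add]
  rw [hpoch, hfact, hfs, hxp]
  field_simp
end
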